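/- Let F and G be two distinct monotone increasing, continuous cumulative distribution functions on ℝ. Let {X_i, i = 1, ..., n} be an i.i.d. sample from F and {Y_i, i = 1, ..., n} an independent i.i.d. sample from G, with order statistics X_(1) ≤ ... ≤ X_(n) and Y_(1) ≤ ... ≤ Y_(n). Set α_n = √(log n · log log n / n), β_n = 1 - α_n, and Λ_m = {i ∈ ℕ : α_n·n < i < β_n·n}. Then the two convergences q_{n,Λ_m}^(1) := max_{i ∈ Λ_m} X_(i)/Y_(i) →_P 1 and q_{n,Λ_m}^(2) := max_{i ∈ Λ_m} Y_(i)/X_(i) →_P 1 cannot hold simultaneously; in fact there exists ε > 0 such that P(|q_{n,Λ_m}^(1) − 1| < ε and |q_{n,Λ_m}^(2) − 1| < ε) → 0 as n → ∞. -/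

import Mathlib

open MeasureTheory ProbabilityTheory Filter Finset Real Topology ENNReal

/-- `orderStat n v i` is the `i`-th order statistic (1-indexed) of the values
`v 0, …, v (n-1)`, i.e. the `i`-th smallest among them. -/
noncomputable def orderStat (n : ℕ) (v : ℕ → ℝ) (i : ℕ) : ℝ :=
  ((List.ofFn fun j : Fin n => v j).insertionSort (· ≤ ·)).getD (i - 1) 0

/-- `α_n = √(log n · log log n / n)`. -/
noncomputable def alphaN (n : ℕ) : ℝ := Real.sqrt (Real.log n * Real.log (Real.log n) / n)

/-- The maximum ranked quotient over the middle index set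
`Λ_m = {i : α_n n < i < (1-α_n) n}` with `α_n = √(log n · log log n / n)`. -/
noncomputable def qMid (n : ℕ) (v w : ℕ → ℝ) : ℝ :=
  ⨆ i : {i : ℕ // alphaN n * n < (i : ℝ) ∧ (i : ℝ) < (1 - alphaN n) * n},
    orderStat n v i.1 / orderStat n w i.1

/-!
Choose a level `p ∈ (0,1)` at which the quantiles `a = F⁻¹(p)` and `b = G⁻¹(p)` differ and are
nonzero of the same sign; this is possible because `F ≠ G`. By the strong law of large numbers
applied to the empirical distribution functions, the order statistics of rank `⌈p n⌉` converge
almost surely to `a` and `b`, and this rank eventually lies in `Λ_m` because `α_n → 0`. Hence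
`max(q⁽¹⁾, q⁽²⁾)` is eventually bounded below by a sequence converging in probability to
`max (a/b) (b/a) > 1`, so both quotients cannot stay close to `1`.
-/

theorem List.SortedLE.getElem_le_iff_lt_countP {α : Type*} [LinearOrder α] {l : List α}
    (hl : l.SortedLE) {i : ℕ} (hi : i < l.length) (t : α) :
    l[i] ≤ t ↔ i < l.countP (· ≤ t) := by
  constructor
  · intro h
    have hpre : ∀ x ∈ l.take (i + 1), x ≤ t := by
      intro x hx
      obtain ⟨j, hj, rfl⟩ := List.getElem_of_mem hx
      rw [List.getElem_take]
      exact (hl.getElem_le_getElem_of_le (by simp at hj; omega)).trans h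
    calc i < (l.take (i + 1)).countP (· ≤ t) := by
          rw [List.countP_eq_length.2 (by simpa using hpre)]; simp; omega
      _ ≤ l.countP (· ≤ t) := (List.take_sublist _ _).countP_le
  · intro h
    by_contra! hlt
    have hsuf : (l.drop i).countP (· ≤ t) = 0 := by
      refine List.countP_eq_zero.2 fun x hx => ?_
      obtain ⟨j, hj, rfl⟩ := List.getElem_of_mem hx
      rw [List.getElem_drop]
      simpa using hlt.trans_le (hl.getElem_le_getElem_of_le (by omega))
    have hpre : (l.take i).countP (· ≤ t) ≤ i :=
      List.countP_le_length.trans (List.length_take_le _ _)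
    rw [← List.take_append_drop i l, List.countP_append, hsuf] at h
    omega

theorem List.countP_ofFn_eq_card_filter {α : Type*} (n : ℕ) (v : ℕ → α) (p : α → Bool) :
    (List.ofFn fun j : Fin n => v j).countP p = #{j ∈ Finset.range n | p (v j)} := by
  induction n with
  | zero => simp
  | succ m ih =>
    rw [List.ofFn_succ_last, List.countP_append, Finset.range_add_one, Finset.filter_insert]
    simp only [Fin.val_castSucc, ih, Fin.val_last]
    split_ifs with h <;> simp [h]

theorem orderStat_le_iff {n i : ℕ} (hi₁ : 1 ≤ i) (hin : i ≤ n) (v : ℕ → ℝ) (t : ℝ) :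
    orderStat n v i ≤ t ↔ i ≤ #{j ∈ range n | v j ≤ t} := by
  set l := (List.ofFn fun j : Fin n => v j).insertionSort (· ≤ ·)
  have hlen : i - 1 < l.length := by simp [l]; omega
  rw [orderStat, List.getD_eq_getElem _ _ hlen,
    List.sortedLE_insertionSort.getElem_le_iff_lt_countP hlen,
    (List.perm_insertionSort _ _).countP_eq, List.countP_ofFn_eq_card_filter]
  simp only [decide_eq_true_eq]
  omega

theorem measurable_card_filter_le {Ω : Type*} [MeasurableSpace Ω] {W : ℕ → Ω → ℝ}
    (hW : ∀ j, Measurable (W j)) (n : ℕ) (t : ℝ) :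
    Measurable fun ω => #{j ∈ range n | W j ω ≤ t} := by
  simp_rw [Finset.card_filter]
  exact Finset.measurable_sum _ fun j _ =>
    Measurable.ite (measurableSet_le (hW j) measurable_const) measurable_const measurable_const

theorem measurable_orderStat {Ω : Type*} [MeasurableSpace Ω] {W : ℕ → Ω → ℝ}
    (hW : ∀ j, Measurable (W j)) (n i : ℕ) :
    Measurable fun ω => orderStat n (fun j => W j ω) i := by
  by_cases hi : i - 1 < n
  · -- ranks `0` and `1` read the same entry, since `0 - 1 = 0` in `ℕ`
    have hrank : ∀ ω, orderStat n (fun j => W j ω) i =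
        orderStat n (fun j => W j ω) (max i 1) := by
      intro ω; unfold orderStat; congr 1; omega
    simp_rw [hrank]
    refine measurable_of_Iic fun t => ?_
    have hiff : ∀ ω, orderStat n (fun j => W j ω) (max i 1) ≤ t ↔
        max i 1 ≤ #{j ∈ range n | W j ω ≤ t} :=
      fun ω => orderStat_le_iff (le_max_right _ _) (by omega) _ t
    rw [show _ ⁻¹' Set.Iic t = _ ⁻¹' Set.Ici (max i 1) from Set.ext hiff]
    exact measurable_card_filter_le hW n t measurableSet_Ici
  · have hzero : ∀ ω, orderStat n (fun j => W j ω) i = 0 := fun ω =>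
      List.getD_eq_default _ _ (by simp; omega)
    simp_rw [hzero]
    exact measurable_const

section EmpiricalCDF

variable {Ω : Type*} [MeasurableSpace Ω] {μ : Measure Ω}

theorem identDistrib_of_measure_le_eq [IsFiniteMeasure μ] {V W : Ω → ℝ} (hV : Measurable V)
    (hW : Measurable W) (h : ∀ x, μ {ω | V ω ≤ x} = μ {ω | W ω ≤ x}) : IdentDistrib V W μ μ where
  aemeasurable_fst := hV.aemeasurable
  aemeasurable_snd := hW.aemeasurable
  map_eq := Measure.ext_of_Iic _ _ fun x => by
    rw [Measure.map_apply hV measurableSet_Iic, Measure.map_apply hW measurableSet_Iic]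
    exact h x

theorem ae_tendsto_card_filter_le_div [IsFiniteMeasure μ] {W : ℕ → Ω → ℝ}
    (hW : ∀ i, Measurable (W i)) (hindep : Pairwise fun i j => W i ⟂ᵢ[μ] W j)
    (hident : ∀ i, IdentDistrib (W i) (W 0) μ μ) (t : ℝ) :
    ∀ᵐ ω ∂μ, Tendsto (fun n : ℕ => (#{j ∈ range n | W j ω ≤ t} : ℝ) / n) atTop
      (𝓝 (μ.real {ω | W 0 ω ≤ t})) := by
  set g : ℝ → ℝ := (Set.Iic t).indicator 1
  have hg : Measurable g := measurable_one.indicator measurableSet_Iic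
  have hint : Integrable (g ∘ W 0) μ :=
    (integrable_const (1 : ℝ)).indicator ((hW 0) measurableSet_Iic)
  have hmean : μ[g ∘ W 0] = μ.real {ω | W 0 ω ≤ t} :=
    integral_indicator_one ((hW 0) measurableSet_Iic)
  have hslln := strong_law_ae_real (fun i => g ∘ W i) hint
    (fun i j hij => (hindep hij).comp hg hg) (fun i => (hident i).comp hg)
  rw [hmean] at hslln
  filter_upwards [hslln] with ω hω
  convert hω using 3 with n
  rw [Finset.natCast_card_filter]
  rfl

theorem tendsto_orderStat_of_tendsto_card_filter {v : ℕ → ℝ} {C : ℝ → ℝ} {I : ℕ → ℕ} {p a : ℝ}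
    (hp : p ∈ Set.Ioo 0 1) (hI : Tendsto (fun n => (I n : ℝ) / n) atTop (𝓝 p))
    (hlo : ∀ t < a, C t < p) (hhi : ∀ t, a < t → p < C t)
    (hv : ∀ q : ℚ, Tendsto (fun n : ℕ => (#{j ∈ range n | v j ≤ q} : ℝ) / n) atTop (𝓝 (C q))) :
    Tendsto (fun n => orderStat n v (I n)) atTop (𝓝 a) := by
  have hIn : ∀ᶠ n in atTop, 1 ≤ I n ∧ I n ≤ n := by
    filter_upwards [hI.eventually_const_lt hp.1, hI.eventually_lt_const hp.2,
      eventually_gt_atTop 0] with n h0 h1 hn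
    have hn' : (0 : ℝ) < n := by exact_mod_cast hn
    rw [lt_div_iff₀ hn', zero_mul] at h0
    rw [div_lt_one hn'] at h1
    exact ⟨by exact_mod_cast h0, by exact_mod_cast h1.le⟩
  rw [tendsto_order]
  constructor
  · intro c hc
    obtain ⟨q, hcq, hqa⟩ := exists_rat_btwn hc
    filter_upwards [(hv q).eventually_lt hI (hlo q hqa), hIn, eventually_gt_atTop 0]
      with n hlt hIn hn
    rw [div_lt_div_iff_of_pos_right (by exact_mod_cast hn)] at hlt
    refine hcq.trans (not_le.1 fun hle => ?_)
    rw [orderStat_le_iff hIn.1 hIn.2] at hle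
    exact absurd hlt (not_lt.2 (by exact_mod_cast hle))
  · intro c hc
    obtain ⟨q, haq, hqc⟩ := exists_rat_btwn hc
    filter_upwards [hI.eventually_lt (hv q) (hhi q haq), hIn, eventually_gt_atTop 0]
      with n hlt hIn hn
    rw [div_lt_div_iff_of_pos_right (by exact_mod_cast hn)] at hlt
    refine lt_of_le_of_lt ?_ hqc
    rw [orderStat_le_iff hIn.1 hIn.2]
    exact_mod_cast hlt.le

theorem ae_tendsto_orderStat [IsFiniteMeasure μ] {W : ℕ → Ω → ℝ}
    (hW : ∀ i, Measurable (W i)) (hindep : Pairwise fun i j => W i ⟂ᵢ[μ] W j)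
    (hident : ∀ i, IdentDistrib (W i) (W 0) μ μ) {I : ℕ → ℕ} {p a : ℝ}
    (hp : p ∈ Set.Ioo 0 1) (hI : Tendsto (fun n => (I n : ℝ) / n) atTop (𝓝 p))
    (hlo : ∀ t < a, μ.real {ω | W 0 ω ≤ t} < p)
    (hhi : ∀ t, a < t → p < μ.real {ω | W 0 ω ≤ t}) :
    ∀ᵐ ω ∂μ, Tendsto (fun n => orderStat n (fun j => W j ω) (I n)) atTop (𝓝 a) := by
  filter_upwards [ae_all_iff.2 fun q : ℚ => ae_tendsto_card_filter_le_div hW hindep hident q]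
    with ω hω
  exact tendsto_orderStat_of_tendsto_card_filter hp hI hlo hhi hω

theorem ae_tendsto_orderStat_of_cdf [IsFiniteMeasure μ] {W : ℕ → Ω → ℝ} {H : ℝ → ℝ}
    (hW : ∀ i, Measurable (W i)) (hindep : Pairwise fun i j => W i ⟂ᵢ[μ] W j)
    (hcdf : ∀ i x, μ {ω | W i ω ≤ x} = ENNReal.ofReal (H x)) (hH : StrictMono H)
    {I : ℕ → ℕ} {a : ℝ} (hp : H a ∈ Set.Ioo 0 1)
    (hI : Tendsto (fun n => (I n : ℝ) / n) atTop (𝓝 (H a))) :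
    ∀ᵐ ω ∂μ, Tendsto (fun n => orderStat n (fun j => W j ω) (I n)) atTop (𝓝 a) := by
  have hreal : ∀ x, μ.real {ω | W 0 ω ≤ x} = max (H x) 0 := fun x => by
    rw [measureReal_def, hcdf, ENNReal.toReal_ofReal']
  refine ae_tendsto_orderStat hW hindep
    (fun i => identDistrib_of_measure_le_eq (hW i) (hW 0) fun x => by rw [hcdf, hcdf]) hp hI
    (fun t ht => ?_) (fun t ht => ?_)
  · rw [hreal]; exact max_lt (hH ht) hp.1
  · rw [hreal]; exact (hH ht).trans_le (le_max_left _ _)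

end EmpiricalCDF

section DistributionFunction

variable {F G : ℝ → ℝ}

theorem StrictMono.mem_Ioo_of_tendsto (hF : StrictMono F) (hF0 : Tendsto F atBot (𝓝 0))
    (hF1 : Tendsto F atTop (𝓝 1)) (x : ℝ) : F x ∈ Set.Ioo 0 1 :=
  ⟨(hF.monotone.le_of_tendsto hF0 (x - 1)).trans_lt (hF (by linarith)),
    (hF (by linarith)).trans_le (hF.monotone.ge_of_tendsto hF1 (x + 1))⟩

theorem Continuous.exists_eq_of_tendsto (hG : Continuous G) (hG0 : Tendsto G atBot (𝓝 0))
    (hG1 : Tendsto G atTop (𝓝 1)) {p : ℝ} (hp : p ∈ Set.Ioo 0 1) : ∃ y, G y = p :=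
  mem_range_of_exists_le_of_exists_ge hG ((hG0.eventually_le_const hp.1).exists)
    ((hG1.eventually_const_le hp.2).exists)

theorem exists_eq_ne_mul_pos (hF : StrictMono F) (hG : StrictMono G)
    (hsurj : ∀ x, ∃ y, G y = F x) (hFG : F ≠ G) : ∃ a b, F a = G b ∧ a ≠ b ∧ 0 < a * b := by
  -- With `G c = F 0` and `c ≠ 0`, the point `a = c / 2` works: its partner `b` lies beyond `c`.
  obtain ⟨c, hc⟩ := hsurj 0
  rcases lt_trichotomy c 0 with hc0 | rfl | hc0
  · obtain ⟨b, hb⟩ := hsurj (c / 2)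
    have hbc : b < c := hG.lt_iff_lt.1 (by rw [hb, hc]; exact hF (by linarith))
    exact ⟨c / 2, b, hb.symm, by linarith, by nlinarith⟩
  · obtain ⟨x, hx⟩ := Function.ne_iff.1 hFG
    obtain ⟨b, hb⟩ := hsurj x
    refine ⟨x, b, hb.symm, fun hxb => hx (hxb ▸ hb.symm), ?_⟩
    rcases lt_trichotomy x 0 with hx0 | rfl | hx0
    · have : b < 0 := hG.lt_iff_lt.1 (by rw [hb, hc]; exact hF hx0)
      nlinarith
    · exact absurd hc.symm hx
    · have : 0 < b := hG.lt_iff_lt.1 (by rw [hb, hc]; exact hF hx0)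
      nlinarith
  · obtain ⟨b, hb⟩ := hsurj (c / 2)
    have hbc : c < b := hG.lt_iff_lt.1 (by rw [hc, hb]; exact hF (by linarith))
    exact ⟨c / 2, b, hb.symm, by linarith, by nlinarith⟩

end DistributionFunction

theorem one_lt_max_div_div {a b : ℝ} (hab : 0 < a * b) (hne : a ≠ b) :
    1 < max (a / b) (b / a) := by
  have hb : b ≠ 0 := by rintro rfl; simp at hab
  have hpos : 0 < a / b := by
    rcases mul_pos_iff.1 hab with h | h
    exacts [div_pos h.1 h.2, div_pos_of_neg_of_neg h.1 h.2]
  rcases (show a / b ≠ 1 by rwa [Ne, div_eq_one_iff_eq hb]).lt_or_gt with h | h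
  · rw [← inv_div a b]; exact lt_max_of_lt_right ((one_lt_inv₀ hpos).2 h)
  · exact lt_max_of_lt_left h

theorem tendsto_alphaN : Tendsto alphaN atTop (𝓝 0) := by
  have hlog : Tendsto (fun n : ℕ => √(Real.log n ^ 2 / n)) atTop (𝓝 0) := by
    have h : Tendsto (fun x : ℝ => Real.log x ^ 2 / x) atTop (𝓝 0) := by
      simpa using Real.tendsto_pow_log_div_mul_add_atTop 1 0 2 one_ne_zero
    simpa only [Function.comp_def, Real.sqrt_zero] using
      (Real.continuous_sqrt.tendsto 0).comp (h.comp tendsto_natCast_atTop_atTop)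
  refine tendsto_of_tendsto_of_tendsto_of_le_of_le' tendsto_const_nhds hlog
    (Eventually.of_forall fun n => Real.sqrt_nonneg _) ?_
  filter_upwards [eventually_ge_atTop 1] with n hn
  have hn1 : (1 : ℝ) ≤ n := by exact_mod_cast hn
  have hlog0 : 0 ≤ Real.log n := Real.log_nonneg hn1
  have hloglog : Real.log (Real.log n) ≤ Real.log n := Real.log_le_self hlog0
  unfold alphaN
  gcongr
  nlinarith

def middleIndex (n : ℕ) : Set ℕ := {i | alphaN n * n < i ∧ (i : ℝ) < (1 - alphaN n) * n}

theorem eventually_mem_middleIndex {I : ℕ → ℕ} {p : ℝ} (hp : p ∈ Set.Ioo 0 1)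
    (hI : Tendsto (fun n => (I n : ℝ) / n) atTop (𝓝 p)) :
    ∀ᶠ n in atTop, I n ∈ middleIndex n := by
  have hβ : Tendsto (fun n => 1 - alphaN n) atTop (𝓝 1) := by
    simpa using tendsto_alphaN.const_sub 1
  filter_upwards [tendsto_alphaN.eventually_lt hI hp.1, hI.eventually_lt hβ hp.2,
    eventually_gt_atTop 0] with n hlo hhi hn
  have hn' : (0 : ℝ) < n := by exact_mod_cast hn
  rw [lt_div_iff₀ hn'] at hlo
  rw [div_lt_iff₀ hn'] at hhi
  exact ⟨hlo, hhi⟩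

theorem div_le_qMid {n i : ℕ} (hi : i ∈ middleIndex n) (v w : ℕ → ℝ) :
    orderStat n v i / orderStat n w i ≤ qMid n v w := by
  have : Finite (middleIndex n) := by
    refine Set.Finite.to_subtype ((Set.finite_Iio n).subset fun j hj => ?_)
    have hα : 0 ≤ alphaN n := Real.sqrt_nonneg _
    have : (j : ℝ) < n := hj.2.trans_le (by nlinarith [mul_nonneg hα (Nat.cast_nonneg n)])
    exact (Nat.cast_lt.1 this : j < n)
  exact le_ciSup (f := fun i : middleIndex n => orderStat n v i / orderStat n w i)
    (Set.finite_range _).bddAbove ⟨i, hi⟩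

section ConvergenceInMeasure

variable {Ω ι : Type*} [MeasurableSpace Ω] {μ : Measure Ω} {l : Filter ι}

theorem tendsto_measure_lt_of_le_of_tendstoInMeasure {q r : ι → Ω → ℝ} {ρ c : ℝ} (hc : c < ρ)
    (hr : TendstoInMeasure μ r l fun _ => ρ) (hle : ∀ᶠ n in l, ∀ ω, r n ω ≤ q n ω) :
    Tendsto (fun n => μ {ω | q n ω < c}) l (𝓝 0) := by
  refine tendsto_of_tendsto_of_tendsto_of_le_of_le' tendsto_const_nhds
    (tendstoInMeasure_iff_dist.1 hr (ρ - c) (by linarith)) (Eventually.of_forall fun _ => bot_le)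
    (hle.mono fun n hn => measure_mono fun ω (hω : q n ω < c) => ?_)
  show ρ - c ≤ dist (r n ω) ρ
  rw [Real.dist_eq, abs_sub_comm]
  linarith [le_abs_self (ρ - r n ω), hn ω]

theorem not_tendstoInMeasure_and_of_tendsto_measure [NeZero μ] [l.NeBot] {f g : ι → Ω → ℝ}
    {c ε : ℝ} (hε : 0 < ε)
    (h : Tendsto (fun n => μ {ω | |f n ω - c| < ε ∧ |g n ω - c| < ε}) l (𝓝 0)) :
    ¬ (TendstoInMeasure μ f l (fun _ => c) ∧ TendstoInMeasure μ g l (fun _ => c)) := by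
  rintro ⟨hf, hg⟩
  have hsum := (h.add (tendstoInMeasure_iff_dist.1 hf ε hε)).add
    (tendstoInMeasure_iff_dist.1 hg ε hε)
  rw [add_zero, add_zero] at hsum
  refine NeZero.ne (μ Set.univ) (nonpos_iff_eq_zero.1 (ge_of_tendsto' hsum fun n => ?_))
  refine (measure_mono fun ω _ => ?_).trans
    ((measure_union_le _ _).trans (add_le_add_left (measure_union_le _ _) _))
  by_cases hfω : ε ≤ dist (f n ω) c
  · exact Or.inl (Or.inr hfω)
  by_cases hgω : ε ≤ dist (g n ω) c
  · exact Or.inr hgω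
  rw [not_le, Real.dist_eq] at hfω hgω
  exact Or.inl (Or.inl ⟨hfω, hgω⟩)

end ConvergenceInMeasure

theorem exists_tendsto_measure_qMid_near_one {Ω : Type*} [MeasurableSpace Ω] {μ : Measure Ω}
    [IsFiniteMeasure μ] {X Y : ℕ → Ω → ℝ} (hX : ∀ i, Measurable (X i))
    (hY : ∀ i, Measurable (Y i)) {I : ℕ → ℕ} (hI : ∀ᶠ n in atTop, I n ∈ middleIndex n)
    {a b : ℝ} (hab : 0 < a * b) (hne : a ≠ b)
    (hXa : ∀ᵐ ω ∂μ, Tendsto (fun n => orderStat n (fun j => X j ω) (I n)) atTop (𝓝 a))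
    (hYb : ∀ᵐ ω ∂μ, Tendsto (fun n => orderStat n (fun j => Y j ω) (I n)) atTop (𝓝 b)) :
    ∃ ε > (0 : ℝ), Tendsto (fun n => μ {ω |
      |qMid n (fun j => X j ω) (fun j => Y j ω) - 1| < ε ∧
      |qMid n (fun j => Y j ω) (fun j => X j ω) - 1| < ε}) atTop (𝓝 0) := by
  set r : ℕ → Ω → ℝ := fun n ω => max
    (orderStat n (fun j => X j ω) (I n) / orderStat n (fun j => Y j ω) (I n))
    (orderStat n (fun j => Y j ω) (I n) / orderStat n (fun j => X j ω) (I n))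
  have ha : a ≠ 0 := by rintro rfl; simp at hab
  have hb : b ≠ 0 := by rintro rfl; simp at hab
  have hr : TendstoInMeasure μ r atTop fun _ => max (a / b) (b / a) := by
    refine tendstoInMeasure_of_tendsto_ae (fun n => Measurable.aestronglyMeasurable ?_) ?_
    · have hXm := measurable_orderStat hX n (I n)
      have hYm := measurable_orderStat hY n (I n)
      exact (hXm.div hYm).max (hYm.div hXm)
    · filter_upwards [hXa, hYb] with ω hx hy
      exact (hx.div hy hb).max (hy.div hx ha)
  have hle : ∀ᶠ n in atTop, ∀ ω, r n ω ≤ max (qMid n (fun j => X j ω) (fun j => Y j ω))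
      (qMid n (fun j => Y j ω) (fun j => X j ω)) :=
    hI.mono fun n hn ω => max_le_max (div_le_qMid hn _ _) (div_le_qMid hn _ _)
  obtain ⟨ε, hε, hερ⟩ : ∃ ε > 0, 1 + ε < max (a / b) (b / a) :=
    ⟨(max (a / b) (b / a) - 1) / 2, by linarith [one_lt_max_div_div hab hne],
      by linarith [one_lt_max_div_div hab hne]⟩
  refine ⟨ε, hε, tendsto_of_tendsto_of_tendsto_of_le_of_le tendsto_const_nhds
    (tendsto_measure_lt_of_le_of_tendstoInMeasure hερ hr hle) (fun _ => bot_le) fun n => ?_⟩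
  exact measure_mono fun ω hω => max_lt (sub_lt_iff_lt_add'.1 (abs_lt.1 hω.1).2)
    (sub_lt_iff_lt_add'.1 (abs_lt.1 hω.2).2)

theorem stmt6_general {Ω : Type*} [MeasurableSpace Ω] (μ : Measure Ω) [IsProbabilityMeasure μ]
    (F G : ℝ → ℝ)
    (hFmono : StrictMono F)
    (hF0 : Tendsto F atBot (𝓝 0)) (hF1 : Tendsto F atTop (𝓝 1))
    (hGmono : StrictMono G) (hGcont : Continuous G)
    (hG0 : Tendsto G atBot (𝓝 0)) (hG1 : Tendsto G atTop (𝓝 1))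
    (hFG : F ≠ G)
    (X Y : ℕ → Ω → ℝ)
    (hmeas : ∀ j, Measurable (Sum.elim X Y j))
    (hindep : iIndepFun (Sum.elim X Y) μ)
    (hX : ∀ i x, μ {ω | X i ω ≤ x} = ENNReal.ofReal (F x))
    (hY : ∀ i x, μ {ω | Y i ω ≤ x} = ENNReal.ofReal (G x)) :
    ¬ (TendstoInMeasure μ (fun n ω => qMid n (fun j => X j ω) (fun j => Y j ω))
          atTop (fun _ => (1 : ℝ)) ∧
        TendstoInMeasure μ (fun n ω => qMid n (fun j => Y j ω) (fun j => X j ω))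
          atTop (fun _ => (1 : ℝ))) ∧
      ∃ ε > (0 : ℝ),
        Tendsto (fun n => μ {ω |
            |qMid n (fun j => X j ω) (fun j => Y j ω) - 1| < ε ∧
            |qMid n (fun j => Y j ω) (fun j => X j ω) - 1| < ε})
          atTop (𝓝 0) := by
  have hFrange := hFmono.mem_Ioo_of_tendsto hF0 hF1
  obtain ⟨a, b, hab, hne, hpos⟩ := exists_eq_ne_mul_pos hFmono hGmono
    (fun x => hGcont.exists_eq_of_tendsto hG0 hG1 (hFrange x)) hFG
  have hI : Tendsto (fun n : ℕ => (⌈F a * n⌉₊ : ℝ) / n) atTop (𝓝 (F a)) :=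
    (tendsto_nat_ceil_mul_div_atTop (hFrange a).1.le).comp tendsto_natCast_atTop_atTop
  have hXa := ae_tendsto_orderStat_of_cdf (fun i => hmeas (.inl i))
    (fun i j hij => hindep.indepFun (Sum.inl_injective.ne hij)) hX hFmono (hFrange a) hI
  have hYb := ae_tendsto_orderStat_of_cdf (fun i => hmeas (.inr i))
    (fun i j hij => hindep.indepFun (Sum.inr_injective.ne hij)) hY hGmono
    (by rw [← hab]; exact hFrange a) (by rwa [← hab])
  obtain ⟨ε, hε, hsmall⟩ := exists_tendsto_measure_qMid_near_one (fun i => hmeas (.inl i))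
    (fun i => hmeas (.inr i)) (eventually_mem_middleIndex (hFrange a) hI) hpos hne hXa hYb
  exact ⟨not_tendstoInMeasure_and_of_tendsto_measure hε hsmall, ε, hε, hsmall⟩

/-- Let `F` and `G` be two distinct monotone increasing, continuous
CDFs, `X_i` i.i.d. with CDF `F` and `Y_i` i.i.d. with CDF `G`, all independent. With
`α_n = √(log n log log n / n)`, `β_n = 1 - α_n` and `Λ_m = {i : α_n n < i < β_n n}`,
the convergences `q_{n,Λ_m}^(1) →_P 1` and `q_{n,Λ_m}^(2) →_P 1` cannot hold
simultaneously; in fact there is `ε > 0` with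
`P(|q_{n,Λ_m}^(1) − 1| < ε ∧ |q_{n,Λ_m}^(2) − 1| < ε) → 0`. -/
theorem stmt6 {Ω : Type*} [MeasurableSpace Ω] (μ : Measure Ω) [IsProbabilityMeasure μ]
    (F G : ℝ → ℝ)
    (hFmono : StrictMono F) (hFcont : Continuous F)
    (hF0 : Tendsto F atBot (𝓝 0)) (hF1 : Tendsto F atTop (𝓝 1))
    (hGmono : StrictMono G) (hGcont : Continuous G)
    (hG0 : Tendsto G atBot (𝓝 0)) (hG1 : Tendsto G atTop (𝓝 1))
    (hFG : F ≠ G)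
    (X Y : ℕ → Ω → ℝ)
    (hmeas : ∀ j, Measurable (Sum.elim X Y j))
    (hindep : iIndepFun (Sum.elim X Y) μ)
    (hX : ∀ i x, μ {ω | X i ω ≤ x} = ENNReal.ofReal (F x))
    (hY : ∀ i x, μ {ω | Y i ω ≤ x} = ENNReal.ofReal (G x)) :
    ¬ (TendstoInMeasure μ (fun n ω => qMid n (fun j => X j ω) (fun j => Y j ω))
          atTop (fun _ => (1 : ℝ)) ∧
        TendstoInMeasure μ (fun n ω => qMid n (fun j => Y j ω) (fun j => X j ω))
          atTop (fun _ => (1 : ℝ))) ∧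
      ∃ ε > (0 : ℝ),
        Tendsto (fun n => μ {ω |
            |qMid n (fun j => X j ω) (fun j => Y j ω) - 1| < ε ∧
            |qMid n (fun j => Y j ω) (fun j => X j ω) - 1| < ε})
          atTop (𝓝 0) :=
  stmt6_general μ F G hFmono hF0 hF1 hGmono hGcont hG0 hG1 hFG X Y hmeas hindep hX hY
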